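/- arXiv:0903.5053 — 5 statements merged into one kernel-verified Lean document; each statement's English description precedes it below -/
import Mathlib

section
/- If A = (A_1, A_2, A_3, A_4) is a supplementary difference set in a finite abelian group of order n with parameters (n; k_1, k_2, k_3, k_4; λ) satisfying λ = k_1 + k_2 + k_3 + k_4 - n, and a_i = n - 2k_i, then a_1² + a_2² + a_3² + a_4² = 4n. -/
/-- If (A₁,A₂,A₃,A₄) is an SDS in a finite abelian group of order n
with parameters (n; k₁,k₂,k₃,k₄; λ) satisfying λ = k₁+k₂+k₃+k₄-n, and aᵢ = n-2kᵢ,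
then a₁²+a₂²+a₃²+a₄² = 4n. -/
theorem stmt0 {G : Type*} [AddCommGroup G] [Fintype G] [DecidableEq G]
    (n lam : ℕ) (hn : Fintype.card G = n)
    (A : Fin 4 → Finset G) (k : Fin 4 → ℕ)
    (hk : ∀ i, (A i).card = k i)
    (hSDS : ∀ a : G, a ≠ 0 →
      (∑ i, ((A i ×ˢ A i).filter (fun p => p.1 - p.2 = a)).card) = lam)
    (hlam : (lam : ℤ) = (k 0 : ℤ) + k 1 + k 2 + k 3 - n) :
    (∑ i, ((n : ℤ) - 2 * (k i : ℤ)) ^ 2) = 4 * (n : ℤ) := by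
  have hnpos : 0 < n := hn ▸ Fintype.card_pos
  -- fiberwise count over all a
  have key : ∀ i, ∑ a : G, ((A i ×ˢ A i).filter (fun p => p.1 - p.2 = a)).card
      = k i * k i := by
    intro i
    rw [← hk i, ← Finset.card_product]
    exact (Finset.card_eq_sum_card_fiberwise (fun p _ => Finset.mem_univ _)).symm
  -- count at a = 0
  have zero : ∀ i, ((A i ×ˢ A i).filter (fun p => p.1 - p.2 = 0)).card = k i := by
    intro i
    have : ((A i ×ˢ A i).filter (fun p => p.1 - p.2 = 0)) = (A i).diag := by
      ext p
      simp only [Finset.mem_filter, Finset.mem_product, Finset.mem_diag, sub_eq_zero]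
      constructor
      · rintro ⟨⟨h1, h2⟩, h3⟩; exact ⟨h1, h3⟩
      · rintro ⟨h1, h3⟩; exact ⟨⟨h1, h3 ▸ h1⟩, h3⟩
    rw [this, Finset.diag_card, hk i]
  -- total count
  have total : ∑ i, k i * k i = (∑ i, k i) + (n - 1) * lam := by
    have h1 : ∑ i, ∑ a : G, ((A i ×ˢ A i).filter (fun p => p.1 - p.2 = a)).card
        = ∑ i, k i * k i := Finset.sum_congr rfl (fun i _ => key i)
    rw [← h1, Finset.sum_comm]
    rw [← Finset.sum_filter_add_sum_filter_not Finset.univ (fun a : G => a = 0)]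
    have hz : (Finset.univ.filter (fun a : G => a = 0)) = {0} := by
      ext a; simp
    have hzsum : ∑ a ∈ Finset.univ.filter (fun a : G => a = 0),
        ∑ i, ((A i ×ˢ A i).filter (fun p => p.1 - p.2 = a)).card = ∑ i, k i := by
      rw [hz, Finset.sum_singleton]
      exact Finset.sum_congr rfl (fun i _ => zero i)
    rw [hzsum]
    have hcard : (Finset.univ.filter (fun a : G => ¬ a = 0)).card = n - 1 := by
      have : (Finset.univ.filter (fun a : G => ¬ a = 0)) = Finset.univ \ {0} := by
        ext a; simp
      rw [this, Finset.card_sdiff_of_subset (by simp), Finset.card_singleton,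
        Finset.card_univ, hn]
    rw [Finset.sum_congr rfl (fun a ha => hSDS a (Finset.mem_filter.mp ha).2),
      Finset.sum_const, hcard, smul_eq_mul]
  -- cast to ℤ and finish
  have totalZ : ((k 0 : ℤ))^2 + (k 1 : ℤ)^2 + (k 2 : ℤ)^2 + (k 3 : ℤ)^2
      = ((k 0 : ℤ) + k 1 + k 2 + k 3) + ((n : ℤ) - 1) * lam := by
    have := congrArg (fun m : ℕ => (m : ℤ)) total
    simp only [Fin.sum_univ_four] at this
    push_cast [Nat.cast_sub hnpos] at this
    linarith [this]
  simp only [Fin.sum_univ_four]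
  linear_combination 4 * totalZ + 4 * ((n : ℤ) - 1) * hlam
end

section
/- If X is a type I matrix and Y is a type II matrix relative to a finite abelian group 𝒜, then XY and YX are type II matrices, and X and Y are amicable, i.e., X Yᵀ = Y Xᵀ. -/
/-- If X is type I and Y is type II (relative to a finite abelian group),
then XY and YX are type II, and X and Y are amicable: X Yᵀ = Y Xᵀ. -/
theorem stmt5 {G R : Type*} [AddCommGroup G] [Fintype G] [DecidableEq G] [CommRing R]
    (X Y : Matrix G G R)
    (hX : ∀ x y z : G, X (x + z) (y + z) = X x y)
    (hY : ∀ x y z : G, Y (x + z) (y - z) = Y x y) :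
    (∀ x y z : G, (X * Y) (x + z) (y - z) = (X * Y) x y) ∧
    (∀ x y z : G, (Y * X) (x + z) (y - z) = (Y * X) x y) ∧
    X * Y.transpose = Y * X.transpose := by
  refine ⟨?_, ?_, ?_⟩
  · intro x y z
    simp only [Matrix.mul_apply]
    refine Fintype.sum_equiv (Equiv.subRight z) _ _ fun k => ?_
    simp only [Equiv.subRight_apply]
    have e1 : X (x + z) k = X x (k - z) := by
      have := hX x (k - z) z; simpa using this
    have e2 : Y k (y - z) = Y (k - z) y := by
      have := hY (k - z) y z; simpa using this
    rw [e1, e2]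
  · intro x y z
    simp only [Matrix.mul_apply]
    refine Fintype.sum_equiv (Equiv.addRight z) _ _ fun k => ?_
    simp only [Equiv.coe_addRight]
    have e1 : Y (x + z) k = Y x (k + z) := by
      have := hY x (k + z) z; simpa using this
    have e2 : X k (y - z) = X (k + z) y := by
      have := hX k (y - z) z; rw [this.symm]; congr 1; abel
    rw [e1, e2]
  · ext x y
    simp only [Matrix.mul_apply, Matrix.transpose_apply]
    have h1 : ∀ a b : G, X (a - b) 0 = X a b := by
      intro a b; have := hX (a - b) 0 b; simpa using this.symm
    have h2 : ∀ a b : G, Y 0 (a + b) = Y a b := by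
      intro a b; have := hY 0 (a + b) a; simpa [add_comm] using this.symm
    refine Fintype.sum_equiv (Equiv.addRight (y - x)) _ _ fun k => ?_
    simp only [Equiv.coe_addRight]
    rw [← h1 x k, ← h2 y k, ← h2 x (k + (y - x)), ← h1 y (k + (y - x))]
    have e1 : x + (k + (y - x)) = y + k := by abel
    have e2 : y - (k + (y - x)) = x - k := by abel
    rw [e1, e2, mul_comm]
end

section
/- If X and Y are type I symmetric matrices relative to a finite abelian group 𝒜, and R is the type II matrix R_{x,y} = δ_{x+y,0}, then XR and YR are amicable and commute. -/
section aux
variable {G R : Type*} [AddCommGroup G] [Fintype G] [DecidableEq G] [CommRing R]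

lemma aux_comm (X Y : Matrix G G R)
    (hX : ∀ x y z : G, X (x + z) (y + z) = X x y)
    (hY : ∀ x y z : G, Y (x + z) (y + z) = Y x y) : X * Y = Y * X := by
  have hX' : ∀ a b : G, X a b = X (a - b) 0 := fun a b => by
    have := hX (a - b) 0 b; simpa using this
  have hY' : ∀ a b : G, Y a b = Y (a - b) 0 := fun a b => by
    have := hY (a - b) 0 b; simpa using this
  ext x z
  simp only [Matrix.mul_apply]
  apply Fintype.sum_bijective (fun y => x + z - y) (Equiv.subLeft (x + z)).bijective
  intro y
  rw [hX' x y, hY' y z, hY' x (x + z - y), hX' (x + z - y) z]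
  have h1 : x - (x + z - y) = y - z := by abel
  have h2 : (x + z - y) - z = x - y := by abel
  rw [h1, h2, mul_comm]

lemma aux_MY (Y M : Matrix G G R)
    (hM : ∀ x y : G, M x y = if x + y = 0 then 1 else 0) (x z : G) :
    (M * Y) x z = Y (-x) z := by
  simp only [Matrix.mul_apply, hM]
  have : ∀ y : G, x + y = 0 ↔ y = -x := fun y => by
    constructor <;> intro h <;> [exact neg_eq_of_add_eq_zero_right h |>.symm; simp [h]]
  simp only [this, ite_mul, one_mul, zero_mul]
  simp

lemma aux_YM (Y M : Matrix G G R)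
    (hM : ∀ x y : G, M x y = if x + y = 0 then 1 else 0) (x z : G) :
    (Y * M) x z = Y x (-z) := by
  simp only [Matrix.mul_apply, hM]
  have : ∀ y : G, y + z = 0 ↔ y = -z := fun y => by
    constructor <;> intro h <;> [exact eq_neg_of_add_eq_zero_left h; simp [h]]
  simp only [this, mul_ite, mul_one, mul_zero]
  simp

lemma aux_conj (Y M : Matrix G G R)
    (hY : ∀ x y z : G, Y (x + z) (y + z) = Y x y)
    (hYs : Y.transpose = Y)
    (hM : ∀ x y : G, M x y = if x + y = 0 then 1 else 0) : M * Y * M = Y := by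
  ext x w
  rw [aux_YM (M * Y) M hM, aux_MY Y M hM]
  have := hY (-x) (-w) (x + w)
  have h1 : -x + (x + w) = w := by abel
  have h2 : -w + (x + w) = x := by abel
  rw [h1, h2] at this
  rw [← this]
  have h3 := congrFun (congrFun hYs x) w
  simpa [Matrix.transpose_apply] using h3

lemma aux_Msym (M : Matrix G G R)
    (hM : ∀ x y : G, M x y = if x + y = 0 then 1 else 0) : M.transpose = M := by
  ext x y
  simp only [Matrix.transpose_apply, hM, add_comm]

lemma aux_M2 (M : Matrix G G R)
    (hM : ∀ x y : G, M x y = if x + y = 0 then 1 else 0) : M * M = 1 := by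
  ext x z
  rw [aux_MY M M hM, hM, Matrix.one_apply]
  congr 1
  simp [neg_add_eq_zero, eq_comm]

end aux

/-- If X and Y are type I symmetric matrices and R is the type II matrix
R_{x,y} = δ_{x+y,0}, then XR and YR are amicable and commute. -/
theorem stmt7 {G R : Type*} [AddCommGroup G] [Fintype G] [DecidableEq G] [CommRing R]
    (X Y M : Matrix G G R)
    (hX : ∀ x y z : G, X (x + z) (y + z) = X x y) (hXs : X.transpose = X)
    (hY : ∀ x y z : G, Y (x + z) (y + z) = Y x y) (hYs : Y.transpose = Y)
    (hM : ∀ x y : G, M x y = if x + y = 0 then 1 else 0) :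
    (X * M) * (Y * M).transpose = (Y * M) * (X * M).transpose ∧
    (X * M) * (Y * M) = (Y * M) * (X * M) := by
  have hc := aux_comm X Y hX hY
  constructor
  · rw [Matrix.transpose_mul, Matrix.transpose_mul, aux_Msym M hM, hXs, hYs,
      Matrix.mul_assoc X M, ← Matrix.mul_assoc M M, aux_M2 M hM, Matrix.one_mul,
      Matrix.mul_assoc Y M, ← Matrix.mul_assoc M M, aux_M2 M hM, Matrix.one_mul, hc]
  · calc (X * M) * (Y * M) = X * (M * Y * M) := by
          rw [Matrix.mul_assoc X M (Y*M), ← Matrix.mul_assoc M Y M]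
      _ = X * Y := by rw [aux_conj Y M hY hYs hM]
      _ = Y * X := hc
      _ = Y * (M * X * M) := by rw [aux_conj X M hX hXs hM]
      _ = (Y * M) * (X * M) := by rw [Matrix.mul_assoc Y M (X*M), ← Matrix.mul_assoc M X M]
end

section
/- If (A_1, A_2, A_3, A_4) is an SDS in a finite abelian group 𝒜 of order n with parameters (n; k_1,k_2,k_3,k_4; λ) where λ = k_1+k_2+k_3+k_4-n, then the associated type I ±1 matrices A_i^c satisfy Σ_{i=1}^{4} (A_i^c)ᵀ A_i^c = 4n·I_n. -/
/-!
Expanding `(1 - 2χ_B(x - z)) (1 - 2χ_B(y - z))` and summing over `z`, the `(x, y)` entry of `Mᵀ M`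
for the type I matrix `M` of `B` is
`n - 4|B| + 4 #{z | x - z ∈ B ∧ y - z ∈ B}`, and the last count is the number of representations
of `y - x` as a difference of two elements of `B` (which is `|B|` on the diagonal). Summing over the
four sets, the diagonal entries are `4n` and, by the SDS condition and `λ = Σ kᵢ - n`, the
off-diagonal ones are `4n - 4 Σ kᵢ + 4λ = 0`.
-/

open Finset Matrix
open scoped Pointwise

section

variable {G : Type*} [AddCommGroup G] [DecidableEq G]

namespace Finset

lemma card_filter_sub_mem [Fintype G] (B : Finset G) (x : G) : #{z | x - z ∈ B} = #B :=
  card_equiv (Equiv.subLeft x) (by simp)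

lemma card_filter_sub_mem_and_sub_mem [Fintype G] (B : Finset G) (x y : G) :
    #{z | x - z ∈ B ∧ y - z ∈ B} = B.addConvolution (-B) (y - x) := by
  rw [← card_inter_vadd]
  refine card_equiv (Equiv.subLeft y) fun z => ?_
  simp [← neg_vadd_mem_iff, and_comm]

lemma addConvolution_neg_self_zero (B : Finset G) : B.addConvolution (-B) 0 = #B := by
  rw [← card_inter_vadd, zero_vadd, inter_self]

end Finset

def typeIMatrix (R : Type*) [Ring R] (B : Finset G) : Matrix G G R :=
  of fun x y => 1 - 2 * if y - x ∈ B then 1 else 0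

lemma transpose_typeIMatrix_mul_self_apply (R : Type*) [CommRing R] [Fintype G]
    (B : Finset G) (x y : G) :
    ((typeIMatrix R B)ᵀ * typeIMatrix R B) x y
      = Fintype.card G - 4 * #B + 4 * B.addConvolution (-B) (y - x) := by
  have expand : ∀ z : G,
      (1 - 2 * if x - z ∈ B then (1 : R) else 0) * (1 - 2 * if y - z ∈ B then 1 else 0)
        = 1 - 2 * (if x - z ∈ B then 1 else 0) - 2 * (if y - z ∈ B then 1 else 0)
          + 4 * if x - z ∈ B ∧ y - z ∈ B then 1 else 0 := by
    intro z
    rw [← one_mul (1 : R), ← ite_zero_mul_ite_zero, one_mul]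
    ring
  simp only [mul_apply, transpose_apply, typeIMatrix, of_apply, expand, sum_add_distrib,
    sum_sub_distrib, ← mul_sum, sum_boole, card_filter_sub_mem, card_filter_sub_mem_and_sub_mem,
    sum_const, card_univ, nsmul_eq_mul, mul_one]
  ring

end

/-- If (A₁,...,A₄) is an SDS with parameters (n; k₁,...,k₄; λ) where
λ = k₁+k₂+k₃+k₄-n, then the associated type I ±1 matrices Aᵢᶜ, defined by
(Aᵢᶜ)_{x,y} = 1 - 2χ_{Aᵢ}(y-x), satisfy ∑ᵢ (Aᵢᶜ)ᵀ Aᵢᶜ = 4n·Iₙ. -/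
theorem stmt8 {G : Type*} [AddCommGroup G] [Fintype G] [DecidableEq G]
    (n lam : ℕ) (hn : Fintype.card G = n)
    (A : Fin 4 → Finset G) (k : Fin 4 → ℕ)
    (hk : ∀ i, (A i).card = k i)
    (hSDS : ∀ a : G, a ≠ 0 →
      (∑ i, ((A i ×ˢ A i).filter (fun p => p.1 - p.2 = a)).card) = lam)
    (hlam : (lam : ℤ) = (k 0 : ℤ) + k 1 + k 2 + k 3 - n)
    (Ac : Fin 4 → Matrix G G ℤ)
    (hAc : ∀ i x y, Ac i x y = 1 - 2 * (if y - x ∈ A i then 1 else 0)) :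
    ∑ i, (Ac i).transpose * Ac i = (4 * n : ℤ) • (1 : Matrix G G ℤ) := by
  obtain rfl : Ac = fun i => typeIMatrix ℤ (A i) := funext fun i => ext (hAc i)
  simp only [card_sub_eq] at hSDS
  ext x y
  simp only [Matrix.sum_apply, transpose_typeIMatrix_mul_self_apply, Matrix.smul_apply, one_apply,
    smul_eq_mul, hn, hk, Fin.sum_univ_four]
  by_cases hxy : x = y
  · simp only [hxy, sub_self, addConvolution_neg_self_zero, hk, if_true]
    ring
  · have hsum : ∑ i, ((A i).addConvolution (-A i) (y - x) : ℤ) = lam := by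
      exact_mod_cast hSDS (y - x) (sub_ne_zero.mpr (Ne.symm hxy))
    rw [Fin.sum_univ_four] at hsum
    rw [if_neg hxy]
    linear_combination 4 * hsum + 4 * hlam
end

section
/- In the additive group of F_49 = Z/7[x]/(x² - 3), the four sets A_i = A'_i ∪ {0} ∪ (-A'_i), where A'_1 = {1,2,2x,x+2,2x+2,2x-1,3x+1,3x-2,3x+3,3x-3}, A'_2 = {2,x,2x,x+2,x-1,x+3,x-3,2x+3,3x+2,3x+3}, A'_3 = {2,2x,x+1,x+3,x-2,2x-2,2x+3,2x-3,3x-2,3x-3}, A'_4 = {3,3x,x+2,x+3,2x+1,2x+3,3x-1,3x-2,3x+3,3x-3}, form a symmetric SDS with parameters (49; 21, 21, 21, 21; 35). -/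
open Polynomial

/-- The field F₄₉ = ℤ/7[x]/(x² - 3). -/
noncomputable abbrev F49 : Type := AdjoinRoot (X ^ 2 - 3 : (ZMod 7)[X])

/-- Number of representations of `a` as a difference u - v with u, v ∈ S. -/
noncomputable def diffCount {G : Type*} [AddCommGroup G] (S : Set G) (a : G) : ℕ :=
  Set.ncard {p : G × G | p.1 ∈ S ∧ p.2 ∈ S ∧ p.1 - p.2 = a}

lemma SDS16.hmon : (X ^ 2 - 3 : (ZMod 7)[X]).Monic := by monicity!

lemma SDS16.hdeg : (X ^ 2 - 3 : (ZMod 7)[X]).natDegree = 2 := by compute_degree!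

lemma SDS16.aux_pow (i : Fin (X ^ 2 - 3 : (ZMod 7)[X]).natDegree) :
    AdjoinRoot.powerBasisAux' SDS16.hmon i = AdjoinRoot.root _ ^ (i : ℕ) :=
  (AdjoinRoot.powerBasis' SDS16.hmon).basis_eq_pow i

/-- The coordinate linear equivalence: `(a, b) ↦ a + b·x`. -/
noncomputable def SDS16.ψ : (ZMod 7 × ZMod 7) ≃ₗ[ZMod 7] F49 :=
  (LinearEquiv.finTwoArrow (ZMod 7) (ZMod 7)).symm.trans
    (((AdjoinRoot.powerBasis' SDS16.hmon).basis.reindex (finCongr SDS16.hdeg)).equivFun.symm)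

namespace SDS16

lemma ψ_apply (a b : ZMod 7) :
    ψ (a, b) = algebraMap (ZMod 7) F49 a + algebraMap (ZMod 7) F49 b * AdjoinRoot.root _ := by
  simp [ψ, LinearEquiv.finTwoArrow, Module.Basis.equivFun_symm_apply, Fin.sum_univ_two,
    Module.Basis.reindex_apply, AdjoinRoot.powerBasis', aux_pow, Algebra.smul_def]

def G1' : Finset (ZMod 7 × ZMod 7) :=
  {(1,0),(2,0),(0,2),(2,1),(2,2),(-1,2),(1,3),(-2,3),(3,3),(-3,3)}
def G2' : Finset (ZMod 7 × ZMod 7) :=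
  {(2,0),(0,1),(0,2),(2,1),(-1,1),(3,1),(-3,1),(3,2),(2,3),(3,3)}
def G3' : Finset (ZMod 7 × ZMod 7) :=
  {(2,0),(0,2),(1,1),(3,1),(-2,1),(-2,2),(3,2),(-3,2),(-2,3),(-3,3)}
def G4' : Finset (ZMod 7 × ZMod 7) :=
  {(3,0),(0,3),(2,1),(3,1),(1,2),(3,2),(-1,3),(-2,3),(3,3),(-3,3)}

def Gfull (F : Finset (ZMod 7 × ZMod 7)) : Finset (ZMod 7 × ZMod 7) :=
  F ∪ {0} ∪ F.image (fun p => -p)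

set_option maxHeartbeats 1000000 in
lemma img1 (r : F49) (hr : r = AdjoinRoot.root _) : ψ '' (↑G1' : Set (ZMod 7 × ZMod 7)) =
    ({1, 2, 2*r, r + 2, 2*r + 2, 2*r - 1, 3*r + 1, 3*r - 2, 3*r + 3, 3*r - 3} : Set F49) := by
  subst hr
  simp only [G1', Finset.coe_insert, Finset.coe_singleton, Set.image_insert_eq,
    Set.image_singleton, ψ_apply, map_ofNat, map_one, map_zero, map_neg]
  ring_nf

set_option maxHeartbeats 1000000 in
lemma img2 (r : F49) (hr : r = AdjoinRoot.root _) : ψ '' (↑G2' : Set (ZMod 7 × ZMod 7)) =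
    ({2, r, 2*r, r + 2, r - 1, r + 3, r - 3, 2*r + 3, 3*r + 2, 3*r + 3} : Set F49) := by
  subst hr
  simp only [G2', Finset.coe_insert, Finset.coe_singleton, Set.image_insert_eq,
    Set.image_singleton, ψ_apply, map_ofNat, map_one, map_zero, map_neg]
  ring_nf

set_option maxHeartbeats 1000000 in
lemma img3 (r : F49) (hr : r = AdjoinRoot.root _) : ψ '' (↑G3' : Set (ZMod 7 × ZMod 7)) =
    ({2, 2*r, r + 1, r + 3, r - 2, 2*r - 2, 2*r + 3, 2*r - 3, 3*r - 2, 3*r - 3} : Set F49) := by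
  subst hr
  simp only [G3', Finset.coe_insert, Finset.coe_singleton, Set.image_insert_eq,
    Set.image_singleton, ψ_apply, map_ofNat, map_one, map_zero, map_neg]
  ring_nf

set_option maxHeartbeats 1000000 in
lemma img4 (r : F49) (hr : r = AdjoinRoot.root _) : ψ '' (↑G4' : Set (ZMod 7 × ZMod 7)) =
    ({3, 3*r, r + 2, r + 3, 2*r + 1, 2*r + 3, 3*r - 1, 3*r - 2, 3*r + 3, 3*r - 3} : Set F49) := by
  subst hr
  simp only [G4', Finset.coe_insert, Finset.coe_singleton, Set.image_insert_eq,
    Set.image_singleton, ψ_apply, map_ofNat, map_one, map_zero, map_neg]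
  ring_nf

lemma neg_img {α : Type*} [AddGroup α] (S : Set α) : (fun p => -p) '' S = -S := by
  ext z
  simp only [Set.mem_image, Set.mem_neg]
  constructor
  · rintro ⟨p, hp, rfl⟩
    simpa using hp
  · intro h
    exact ⟨-z, h, by simp⟩

lemma psi_img_neg (S : Set (ZMod 7 × ZMod 7)) : ψ '' (-S) = -(ψ '' S) := by
  ext z
  simp only [Set.mem_image, Set.mem_neg]
  constructor
  · rintro ⟨p, hp, rfl⟩
    exact ⟨-p, hp, by simp⟩
  · rintro ⟨p, hp, h⟩
    exact ⟨-p, by simpa using hp, by rw [map_neg, h, neg_neg]⟩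

lemma img_full (F : Finset (ZMod 7 × ZMod 7)) (S : Set F49) (hS : ψ '' ↑F = S) :
    ψ '' (↑(Gfull F) : Set (ZMod 7 × ZMod 7)) = S ∪ {0} ∪ (-S) := by
  subst hS
  rw [Gfull]
  push_cast [Finset.coe_union, Finset.coe_image, Finset.coe_singleton]
  rw [Set.image_union, Set.image_union, neg_img, psi_img_neg]
  congr 1
  congr 1
  simp

lemma diffCount_psi_image (S : Set (ZMod 7 × ZMod 7)) (b : ZMod 7 × ZMod 7) :
    diffCount (ψ '' S) (ψ b) = diffCount S b := by
  have h : {p : F49 × F49 | p.1 ∈ ψ '' S ∧ p.2 ∈ ψ '' S ∧ p.1 - p.2 = ψ b}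
      = (Prod.map ψ ψ) '' {q : (ZMod 7 × ZMod 7) × (ZMod 7 × ZMod 7) |
          q.1 ∈ S ∧ q.2 ∈ S ∧ q.1 - q.2 = b} := by
    ext p
    constructor
    · rintro ⟨⟨u', hu, h1⟩, ⟨v', hv, h2⟩, h⟩
      refine ⟨(u', v'), ⟨hu, hv, ψ.injective ?_⟩, ?_⟩
      · rw [map_sub, h1, h2]; exact h
      · exact Prod.ext h1 h2
    · rintro ⟨⟨u', v'⟩, ⟨hu, hv, hd⟩, rfl⟩
      exact ⟨⟨u', hu, rfl⟩, ⟨v', hv, rfl⟩, by rw [Prod.map]; rw [← map_sub, hd]⟩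
  have hinj : Function.Injective (Prod.map ψ ψ) :=
    Function.Injective.prodMap ψ.injective ψ.injective
  rw [diffCount, h, Set.ncard_image_of_injective _ hinj]
  rfl

lemma diffCount_coe (F : Finset (ZMod 7 × ZMod 7)) (b : ZMod 7 × ZMod 7) :
    diffCount (↑F : Set (ZMod 7 × ZMod 7)) b
      = ((F ×ˢ F).filter fun p => p.1 - p.2 = b).card := by
  rw [diffCount,
    show {p : (ZMod 7 × ZMod 7) × (ZMod 7 × ZMod 7) |
        p.1 ∈ (↑F : Set _) ∧ p.2 ∈ (↑F : Set _) ∧ p.1 - p.2 = b}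
      = ↑((F ×ˢ F).filter fun p => p.1 - p.2 = b) by
        ext ⟨u, v⟩; simp [Finset.mem_filter, Finset.mem_product, and_assoc]]
  exact Set.ncard_coe_finset _

set_option maxHeartbeats 4000000 in
set_option maxRecDepth 40000 in
lemma main_count : ∀ b : ZMod 7 × ZMod 7, b ≠ 0 →
    ∑ i : Fin 4, (((Gfull (![G1', G2', G3', G4'] i)) ×ˢ (Gfull (![G1', G2', G3', G4'] i))).filter
      fun p => p.1 - p.2 = b).card = 35 := by decide

end SDS16

/-- in F₄₉, the four sets Aᵢ = A'ᵢ ∪ {0} ∪ (-A'ᵢ) below form a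
symmetric SDS with parameters (49; 21, 21, 21, 21; 35). -/
theorem stmt16 (x : F49) (hx : x = AdjoinRoot.root _)
    (A1' A2' A3' A4' : Set F49) (A : Fin 4 → Set F49)
    (hA1' : A1' = {1, 2, 2*x, x + 2, 2*x + 2, 2*x - 1, 3*x + 1, 3*x - 2, 3*x + 3, 3*x - 3})
    (hA2' : A2' = {2, x, 2*x, x + 2, x - 1, x + 3, x - 3, 2*x + 3, 3*x + 2, 3*x + 3})
    (hA3' : A3' = {2, 2*x, x + 1, x + 3, x - 2, 2*x - 2, 2*x + 3, 2*x - 3, 3*x - 2, 3*x - 3})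
    (hA4' : A4' = {3, 3*x, x + 2, x + 3, 2*x + 1, 2*x + 3, 3*x - 1, 3*x - 2, 3*x + 3, 3*x - 3})
    (hA : A = fun i => (![A1', A2', A3', A4'] i) ∪ {0} ∪ (-(![A1', A2', A3', A4'] i))) :
    (∀ i, (A i).ncard = 21) ∧ (∀ i, A i = -(A i)) ∧
    ∀ a : F49, a ≠ 0 → (∑ i, diffCount (A i) a) = 35 := by
  open SDS16 in
  have k0 : A 0 = ψ '' (↑(Gfull G1') : Set (ZMod 7 × ZMod 7)) := by
    rw [hA]
    show A1' ∪ {0} ∪ -A1' = _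
    rw [img_full _ _ (img1 x hx), hA1']
  have k1 : A 1 = ψ '' (↑(Gfull G2') : Set (ZMod 7 × ZMod 7)) := by
    rw [hA]
    show A2' ∪ {0} ∪ -A2' = _
    rw [img_full _ _ (img2 x hx), hA2']
  have k2 : A 2 = ψ '' (↑(Gfull G3') : Set (ZMod 7 × ZMod 7)) := by
    rw [hA]
    show A3' ∪ {0} ∪ -A3' = _
    rw [img_full _ _ (img3 x hx), hA3']
  have k3 : A 3 = ψ '' (↑(Gfull G4') : Set (ZMod 7 × ZMod 7)) := by
    rw [hA]
    show A4' ∪ {0} ∪ -A4' = _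
    rw [img_full _ _ (img4 x hx), hA4']
  have key : ∀ i : Fin 4, A i = ψ '' (↑(Gfull (![G1', G2', G3', G4'] i)) : Set (ZMod 7 × ZMod 7)) := by
    intro i
    fin_cases i
    exacts [k0, k1, k2, k3]
  refine ⟨?_, ?_, ?_⟩
  · intro i
    rw [key i, Set.ncard_image_of_injective _ ψ.injective, Set.ncard_coe_finset]
    have h : ∀ j : Fin 4, (Gfull (![G1', G2', G3', G4'] j)).card = 21 := by decide
    exact h i
  · intro i
    rw [key i, ← psi_img_neg]
    refine congrArg (fun S => ψ '' S) ?_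
    have h : ∀ j : Fin 4, (Gfull (![G1', G2', G3', G4'] j)).image (fun p => -p)
        = Gfull (![G1', G2', G3', G4'] j) := by decide
    calc (↑(Gfull (![G1', G2', G3', G4'] i)) : Set (ZMod 7 × ZMod 7))
        = ↑((Gfull (![G1', G2', G3', G4'] i)).image (fun p => -p)) :=
          (Finset.coe_inj.mpr (h i)).symm
      _ = (fun p => -p) '' ↑(Gfull (![G1', G2', G3', G4'] i)) := Finset.coe_image
      _ = -(↑(Gfull (![G1', G2', G3', G4'] i)) : Set (ZMod 7 × ZMod 7)) := neg_img _
  · intro a ha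
    obtain ⟨b, rfl⟩ := ψ.surjective a
    have hb : b ≠ 0 := by
      rintro rfl; exact ha (map_zero ψ)
    have : ∀ i : Fin 4, diffCount (A i) (ψ b)
        = (((Gfull (![G1', G2', G3', G4'] i)) ×ˢ (Gfull (![G1', G2', G3', G4'] i))).filter
            fun p => p.1 - p.2 = b).card := by
      intro i
      rw [key i, diffCount_psi_image, diffCount_coe]
    simp only [this]
    exact main_count b hb
end
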